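/- arXiv:1801.02952 — 2 statements merged into one kernel-verified Lean document; each statement's English description precedes it below -/
import Mathlib

section
/- Let H be a densely defined, self-adjoint, nonnegative operator on a Hilbert space with spectral measure E, let λ > ε > 0 with dist(λ, σ(H)) > ε, and let g be a bounded positive continuous function on [0,∞). Set c₂ = min( inf_{t∈[λ,λ+1]} g(t), inf_{t∈[λ+1,∞)} g(t)(t−λ) ) and c₃ = λ · sup_{t∈[0,λ]} g(t), and assume ε ≤ 1. Let P = E([0,λ−ε]). Then for every unit vector ψ in the domain of H, Re (g(H)ψ, (H−λ)ψ) ≥ c₂ ε ‖(I−P)ψ‖² − c₃ ‖Pψ‖². -/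
open MeasureTheory

/-!
In the multiplication-operator model (`H` is multiplication by `h ≥ 0` on `L²(μ)`, `g(H)` by
`g ∘ h`, `P` by the indicator of `{h ≤ λ - ε}`, with `λ` written `l`) the claim is an integral
inequality, and it holds pointwise. On `{h ≤ λ - ε}` we have `0 ≤ λ - h ≤ λ` and
`g ∘ h ≤ sup_{[0,λ]} g`, so `g(h)(h - λ) ≥ -c₃`. Off that set the spectral gap forces
`h > λ + ε`; there `g(h)(h - λ) ≥ a ε` when `h ≤ λ + 1`, and `g(h)(h - λ) ≥ b` beyond, which is
`≥ c₂ ≥ c₂ ε` when `c₂ > 0` (as `ε ≤ 1`) and `≥ 0 ≥ c₂ ε` otherwise. Integrating both bounds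
against `|ψ|²` gives the inequality; `g(h)(h - λ)|ψ|²` is integrable because `g` is bounded and
`h|ψ|² = |hψ| |ψ|` is a product of two `L²` functions.
-/

theorem ContinuousOn.measurable_comp {α β γ : Type*} [MeasurableSpace α] [TopologicalSpace β]
    [MeasurableSpace β] [OpensMeasurableSpace β] [TopologicalSpace γ] [MeasurableSpace γ]
    [BorelSpace γ] {g : β → γ} {s : Set β} (hg : ContinuousOn g s) {h : α → β}
    (hh : Measurable h) (hs : ∀ x, h x ∈ s) : Measurable fun x => g (h x) :=
  hg.domRestrict.measurable.comp (hh.subtype_mk (h := hs))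

theorem integrable_mul_sq_norm_of_memLp {𝕜 X : Type*} [RCLike 𝕜] [MeasurableSpace X]
    {μ : Measure X} {h : X → ℝ} {ψ : X → 𝕜} (hpos : ∀ x, 0 ≤ h x) (hψ : MemLp ψ 2 μ)
    (hhψ : MemLp (fun x => (h x : 𝕜) * ψ x) 2 μ) :
    Integrable (fun x => h x * ‖ψ x‖ ^ 2) μ := by
  refine (hhψ.norm.integrable_mul hψ.norm).congr (Filter.Eventually.of_forall fun x => ?_)
  simp only [Pi.mul_apply, norm_mul, RCLike.norm_ofReal, abs_of_nonneg (hpos x)]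
  ring

theorem mul_setIntegral_add_mul_setIntegral_compl_le_integral {X : Type*} [MeasurableSpace X]
    {μ : Measure X} {f w : X → ℝ} {A : Set X} (hA : MeasurableSet A) (hf : Integrable f μ)
    (hw : Integrable w μ) {α β : ℝ} (hα : ∀ᵐ x ∂μ, x ∈ A → α * w x ≤ f x)
    (hβ : ∀ᵐ x ∂μ, x ∈ Aᶜ → β * w x ≤ f x) :
    α * ∫ x in A, w x ∂μ + β * ∫ x in Aᶜ, w x ∂μ ≤ ∫ x, f x ∂μ := by
  rw [← integral_add_compl hA hf, ← integral_const_mul, ← integral_const_mul]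
  exact add_le_add
    (setIntegral_mono_on_ae (hw.const_mul α).integrableOn hf.integrableOn hA hα)
    (setIntegral_mono_on_ae (hw.const_mul β).integrableOn hf.integrableOn hA.compl hβ)

theorem neg_mul_le_mul_sub_of_mem_Icc {g : ℝ → ℝ} {l s t : ℝ}
    (hs : s ∈ upperBounds (g '' Set.Icc 0 l)) (ht : t ∈ Set.Icc 0 l) (hgt : 0 ≤ g t) :
    -(l * s) ≤ g t * (t - l) := by
  have hgs : g t ≤ s := hs ⟨t, ht, rfl⟩
  nlinarith [ht.1, ht.2]

theorem min_mul_le_mul_sub_of_lt {g : ℝ → ℝ} {l a b ε t : ℝ}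
    (ha : a ∈ lowerBounds (g '' Set.Icc l (l + 1)))
    (hb : b ∈ lowerBounds ((fun t => g t * (t - l)) '' Set.Ici (l + 1)))
    (hε0 : 0 ≤ ε) (hε1 : ε ≤ 1) (ht : l + ε < t) (hgt : 0 ≤ g t) :
    min a b * ε ≤ g t * (t - l) := by
  rcases le_or_gt t (l + 1) with ht1 | ht1
  · have hga : a ≤ g t := ha ⟨t, ⟨by linarith, ht1⟩, rfl⟩
    calc min a b * ε ≤ a * ε := by gcongr; exact min_le_left a b
      _ ≤ g t * ε := by gcongr
      _ ≤ g t * (t - l) := by gcongr; linarith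
  · have hgb : b ≤ g t * (t - l) := hb ⟨t, ht1.le, rfl⟩
    have hmin : min a b ≤ b := min_le_right a b
    have hpos : 0 ≤ g t * (t - l) := mul_nonneg hgt (by linarith)
    rcases le_or_gt (min a b) 0 with hc | hc
    · nlinarith
    · nlinarith

theorem stmt14_general
    {X : Type*} [MeasurableSpace X] (μ : Measure X)
    (h : X → ℝ) (hmeas : Measurable h) (hpos : ∀ x, 0 ≤ h x)
    (l ε : ℝ) (hε0 : 0 < ε) (hε1 : ε ≤ 1)
    (hgap : ∀ᵐ x ∂μ, ε < |h x - l|)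
    (g : ℝ → ℝ) (hg_cont : ContinuousOn g (Set.Ici 0))
    (hg_pos : ∀ t, 0 ≤ t → 0 < g t) (hg_bdd : BddAbove (g '' Set.Ici 0))
    (a b s c₂ c₃ : ℝ)
    (ha : IsGLB (g '' Set.Icc l (l + 1)) a)
    (hb : IsGLB ((fun t => g t * (t - l)) '' Set.Ici (l + 1)) b)
    (hc₂ : c₂ = min a b)
    (hs : IsLUB (g '' Set.Icc 0 l) s)
    (hc₃ : c₃ = l * s)
    (ψ : X → ℂ) (hψ : MemLp ψ 2 μ)
    (hdom : MemLp (fun x => (h x : ℂ) * ψ x) 2 μ) :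
    c₂ * ε * (∫ x in {x | l - ε < h x}, ‖ψ x‖ ^ 2 ∂μ)
        - c₃ * (∫ x in {x | h x ≤ l - ε}, ‖ψ x‖ ^ 2 ∂μ)
      ≤ ∫ x, g (h x) * (h x - l) * ‖ψ x‖ ^ 2 ∂μ := by
  have hψ_int : Integrable (fun x => ‖ψ x‖ ^ 2) μ := (memLp_two_iff_integrable_sq_norm hψ.1).1 hψ
  have hgh_meas : Measurable fun x => g (h x) := hg_cont.measurable_comp hmeas hpos
  obtain ⟨M, hM⟩ := hg_bdd
  have hf_int : Integrable (fun x => g (h x) * (h x - l) * ‖ψ x‖ ^ 2) μ := by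
    have hsub := (integrable_mul_sq_norm_of_memLp hpos hψ hdom).sub (hψ_int.const_mul l)
    refine (hsub.bdd_mul hgh_meas.aestronglyMeasurable (c := M) (Filter.Eventually.of_forall
      fun x => ?_)).congr (Filter.Eventually.of_forall fun x => by simp only [Pi.sub_apply]; ring)
    rw [Real.norm_of_nonneg (hg_pos _ (hpos x)).le]
    exact hM ⟨h x, hpos x, rfl⟩
  have hA : MeasurableSet {x | h x ≤ l - ε} := measurableSet_le hmeas measurable_const
  have hAc : {x | h x ≤ l - ε}ᶜ = {x | l - ε < h x} := by ext; simp
  have key := mul_setIntegral_add_mul_setIntegral_compl_le_integral hA hf_int hψ_int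
    (α := -c₃) (β := c₂ * ε) (Filter.Eventually.of_forall fun x (hx : h x ≤ l - ε) => by
      rw [hc₃]
      exact mul_le_mul_of_nonneg_right (neg_mul_le_mul_sub_of_mem_Icc hs.1
        ⟨hpos x, by linarith⟩ (hg_pos _ (hpos x)).le) (sq_nonneg _))
    (hgap.mono fun x hx hx_compl => by
      have hxA : l - ε < h x := not_le.1 hx_compl
      have hlt : l + ε < h x := by rcases lt_abs.1 hx with hx' | hx' <;> linarith
      rw [hc₂]
      exact mul_le_mul_of_nonneg_right (min_mul_le_mul_sub_of_lt ha.1 hb.1 hε0.le hε1 hlt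
        (hg_pos _ (hpos x)).le) (sq_nonneg _))
  rw [hAc] at key
  linarith

/-- Lower bound for `Re (g(H)ψ, (H-λ)ψ)` in the reverse direction of the generalized
Weyl criterion, in the multiplication-operator model of a densely defined self-adjoint
nonnegative operator `H` on a complex Hilbert space: `H` is multiplication by a
nonnegative measurable `h` on `L²(μ)`, `g(H)` is multiplication by `g ∘ h`, the spectral
projection `P = E([0, λ-ε])` is multiplication by the indicator of `{h ≤ λ-ε}`, and the
hypothesis `dist(λ, σ(H)) > ε` says that `|h - λ| > ε` almost everywhere.  With
`c₂ = min(inf_{[λ,λ+1]} g, inf_{[λ+1,∞)} g(t)(t-λ))` and `c₃ = λ sup_{[0,λ]} g`, for a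
unit vector `ψ` in the domain of `H`:
`Re (g(H)ψ, (H-λ)ψ) ≥ c₂ ε ‖(I-P)ψ‖² - c₃ ‖Pψ‖²`. -/
theorem stmt14
    {X : Type*} [MeasurableSpace X] (μ : Measure X)
    (h : X → ℝ) (hmeas : Measurable h) (hpos : ∀ x, 0 ≤ h x)
    (l ε : ℝ) (hε0 : 0 < ε) (hεl : ε < l) (hε1 : ε ≤ 1)
    (hgap : ∀ᵐ x ∂μ, ε < |h x - l|)
    (g : ℝ → ℝ) (hg_cont : ContinuousOn g (Set.Ici 0))
    (hg_pos : ∀ t, 0 ≤ t → 0 < g t) (hg_bdd : BddAbove (g '' Set.Ici 0))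
    (a b s c₂ c₃ : ℝ)
    (ha : IsGLB (g '' Set.Icc l (l + 1)) a)
    (hb : IsGLB ((fun t => g t * (t - l)) '' Set.Ici (l + 1)) b)
    (hbpos : 0 < b)
    (hc₂ : c₂ = min a b)
    (hs : IsLUB (g '' Set.Icc 0 l) s)
    (hc₃ : c₃ = l * s)
    (ψ : X → ℂ) (hψ : MemLp ψ 2 μ)
    (hdom : MemLp (fun x => (h x : ℂ) * ψ x) 2 μ)
    (hunit : ∫ x, ‖ψ x‖ ^ 2 ∂μ = 1) :
    c₂ * ε * (∫ x in {x | l - ε < h x}, ‖ψ x‖ ^ 2 ∂μ)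
        - c₃ * (∫ x in {x | h x ≤ l - ε}, ‖ψ x‖ ^ 2 ∂μ)
      ≤ ∫ x, g (h x) * (h x - l) * ‖ψ x‖ ^ 2 ∂μ :=
  stmt14_general μ h hmeas hpos l ε hε0 hε1 hgap g hg_cont hg_pos hg_bdd a b s c₂ c₃ ha hb hc₂ hs
    hc₃ ψ hψ hdom
end

section
/- Let ℋ be a vector space, 𝒞 ⊆ ℋ a subspace, and suppose H₀, H₁ are self-adjoint nonnegative operators (with respect to inner products (·,·)₀ and (·,·)₁ respectively) whose quadratic forms Q₀, Q₁ and norms satisfy, for some 0 < ε < 1/2 and all u ∈ 𝒞: (1−ε)‖u‖₀² ≤ ‖u‖₁² ≤ (1+ε)‖u‖₀² and (1−ε)Q₀(u,u) ≤ Q₁(u,u) ≤ (1+ε)Q₀(u,u). Fix α > 1. If moreover (H_i + α)^{−1} maps 𝒞 into 𝒞 and the Cauchy–Schwarz-type bounds Q_i((H_i+α)^{−1}w, (H_i+α)^{−1}w) ≤ ‖w‖_i² and ‖(H_i+α)^{−1}w‖_i ≤ ‖w‖_i hold on 𝒞, then for all u, v ∈ 𝒞 and every integer m ≥ 0: |((H₁+α)^{−m}u,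 v)₁ − ((H₀+α)^{−m}u, v)₀| ≤ (2m+1) ε ‖u‖₀ ‖v‖₀. -/
/-!
Write `Nᵢ w = Re (w, w)ᵢ`, `Qᵢ w = Re (Hᵢ w, w)ᵢ` and `Dₖ(u, v) = (R₁ᵏ u, v)₁ - (R₀ᵏ u, v)₀`.
With `w = R₀ u` we have `u = H₀ w + α w`, and since `R₁` is symmetric for `(·,·)₁`,
`D_{k+1}(u, v) = [(H₀ w, y)₁ - (H₀ w, y)₀] - [(H₁ w, y)₁ - (H₀ w, y)₀] + Dₖ(w, v)`
where `y = R₁^{k+1} v`. By ε-closeness and Cauchy–Schwarz the two brackets are at most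
`ε √(N₀(H₀ w) + Q₀ w) √(N₀ y + Q₀ y)`. Expanding `N₀ u = N₀(H₀ w) + 2α Q₀ w + α² N₀ w` gives
`N₀(H₀ w) + Q₀ w ≤ N₀ u - N₀ w`, and the same expansion for `R₁`, transported by closeness,
gives `N₀ y + Q₀ y ≤ (1 + ε)/(1 - ε) N₀ v ≤ 3 N₀ v`. A second Cauchy–Schwarz step then
propagates `|Dₖ(u, v)| ≤ ε √(N₀ u) √((3k + 1) N₀ v)`, and `√(3m + 1) ≤ 2m + 1`.
-/

theorem Real.sqrt_mul_sqrt_add_sqrt_mul_sqrt_le {a b c d : ℝ} (ha : 0 ≤ a) (hb : 0 ≤ b)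
    (hc : 0 ≤ c) (hd : 0 ≤ d) : √a * √b + √c * √d ≤ √(a + c) * √(b + d) := by
  simpa [Fin.sum_univ_two] using
    Real.sum_sqrt_mul_sqrt_le (f := ![a, c]) (g := ![b, d]) Finset.univ
      (by simp [Fin.forall_fin_two, ha, hc]) (by simp [Fin.forall_fin_two, hb, hd])

section

variable {E : Type*} [AddCommGroup E] [Module ℂ E]

structure IsPosHermitianForm (ip : E → E → ℂ) : Prop where
  add_left : ∀ u v w : E, ip (u + v) w = ip u w + ip v w
  smul_left : ∀ (a : ℂ) (u v : E), ip (a • u) v = a * ip u v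
  conj_symm : ∀ u v : E, ip v u = starRingEnd ℂ (ip u v)
  re_nonneg : ∀ u : E, 0 ≤ (ip u u).re

theorem Submodule.pow_apply_mem {𝒞 : Submodule ℂ E} {R : E →ₗ[ℂ] E}
    (hmap : ∀ u ∈ 𝒞, R u ∈ 𝒞) (k : ℕ) {u : E} (hu : u ∈ 𝒞) : (R ^ k) u ∈ 𝒞 := by
  rw [Module.End.pow_apply]
  exact Set.MapsTo.iterate (fun u hu ↦ hmap u hu) k hu

namespace IsPosHermitianForm

variable {ip : E → E → ℂ}

theorem add_right (hf : IsPosHermitianForm ip) (u v w : E) :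
    ip u (v + w) = ip u v + ip u w := by
  rw [hf.conj_symm (v + w), hf.add_left, map_add, ← hf.conj_symm, ← hf.conj_symm]

theorem smul_right (hf : IsPosHermitianForm ip) (a : ℂ) (u v : E) :
    ip u (a • v) = starRingEnd ℂ a * ip u v := by
  rw [hf.conj_symm (a • v), hf.smul_left, map_mul, ← hf.conj_symm]

theorem re_add_smul_self (hf : IsPosHermitianForm ip) (a b : E) (α : ℝ) :
    (ip (a + (α : ℂ) • b) (a + (α : ℂ) • b)).re
      = (ip a a).re + 2 * α * (ip a b).re + α ^ 2 * (ip b b).re := by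
  rw [hf.add_left, hf.add_right, hf.add_right, hf.smul_left, hf.smul_left, hf.smul_right,
    hf.smul_right, hf.conj_symm b a]
  simp only [Complex.add_re, Complex.re_ofReal_mul, Complex.conj_ofReal, Complex.conj_re]
  ring

theorem re_add_re_add_re_le (hf : IsPosHermitianForm ip) (a b : E) {α : ℝ} (hα : 1 ≤ α)
    (hab : 0 ≤ (ip a b).re) :
    (ip a a).re + (ip a b).re + (ip b b).re ≤ (ip (a + (α : ℂ) • b) (a + (α : ℂ) • b)).re := by
  rw [hf.re_add_smul_self]
  have hα2 : 1 ≤ α ^ 2 := one_le_pow₀ hα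
  nlinarith [mul_nonneg (sub_nonneg.2 hα2) (hf.re_nonneg b)]

variable {𝒞 : Submodule ℂ E} {H R : E →ₗ[ℂ] E} {α : ℝ}

theorem re_resolvent_le (hf : IsPosHermitianForm ip) (hR : ∀ u, H (R u) + (α : ℂ) • R u = u)
    (hα : 1 ≤ α) (z : E) (hz : 0 ≤ (ip (H (R z)) (R z)).re) :
    (ip (H (R z)) (H (R z))).re + (ip (H (R z)) (R z)).re + (ip (R z) (R z)).re
      ≤ (ip z z).re := by
  simpa only [hR] using hf.re_add_re_add_re_le (H (R z)) (R z) hα hz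

theorem re_pow_apply_le (hf : IsPosHermitianForm ip) (hR : ∀ u, H (R u) + (α : ℂ) • R u = u)
    (hα : 1 ≤ α) (hmap : ∀ u ∈ 𝒞, R u ∈ 𝒞) (hnn : ∀ u ∈ 𝒞, 0 ≤ (ip (H u) u).re)
    (k : ℕ) {u : E} (hu : u ∈ 𝒞) : (ip ((R ^ k) u) ((R ^ k) u)).re ≤ (ip u u).re := by
  induction k with
  | zero => simp
  | succ k ih =>
    have hz := hmap _ (Submodule.pow_apply_mem hmap k hu)
    have hbudget := hf.re_resolvent_le hR hα ((R ^ k) u) (hnn _ hz)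
    rw [pow_succ', Module.End.mul_apply]
    linarith [hf.re_nonneg (H (R ((R ^ k) u))), hnn _ hz]

theorem ip_resolvent_comm (hf : IsPosHermitianForm ip) (hR : ∀ u, H (R u) + (α : ℂ) • R u = u)
    (hmap : ∀ u ∈ 𝒞, R u ∈ 𝒞) (hsa : ∀ u ∈ 𝒞, ∀ v ∈ 𝒞, ip (H u) v = ip u (H v))
    {a b : E} (ha : a ∈ 𝒞) (hb : b ∈ 𝒞) : ip (R a) b = ip a (R b) := by
  conv_lhs => rw [← hR b]
  conv_rhs => rw [← hR a]
  rw [hf.add_right, hf.smul_right, hf.add_left, hf.smul_left, Complex.conj_ofReal,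
    hsa _ (hmap a ha) _ (hmap b hb)]

theorem ip_pow_apply_comm (hf : IsPosHermitianForm ip) (hR : ∀ u, H (R u) + (α : ℂ) • R u = u)
    (hmap : ∀ u ∈ 𝒞, R u ∈ 𝒞) (hsa : ∀ u ∈ 𝒞, ∀ v ∈ 𝒞, ip (H u) v = ip u (H v))
    (k : ℕ) {a b : E} (ha : a ∈ 𝒞) (hb : b ∈ 𝒞) : ip ((R ^ k) a) b = ip a ((R ^ k) b) := by
  induction k generalizing a with
  | zero => simp
  | succ k ih =>
    rw [pow_succ, Module.End.mul_apply, ih (hmap a ha),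
      hf.ip_resolvent_comm hR hmap hsa ha (Submodule.pow_apply_mem hmap k hb),
      ← Module.End.mul_apply, ← pow_succ', ← pow_succ]

theorem ip_pow_succ_apply_add_smul (hf : IsPosHermitianForm ip)
    (hR : ∀ u, H (R u) + (α : ℂ) • R u = u) (hmap : ∀ u ∈ 𝒞, R u ∈ 𝒞)
    (hsa : ∀ u ∈ 𝒞, ∀ v ∈ 𝒞, ip (H u) v = ip u (H v)) (k : ℕ) {a w v : E}
    (hu : a + (α : ℂ) • w ∈ 𝒞) (hw : w ∈ 𝒞) (hv : v ∈ 𝒞) :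
    ip ((R ^ (k + 1)) (a + (α : ℂ) • w)) v
      = ip a ((R ^ (k + 1)) v) - ip (H w) ((R ^ (k + 1)) v) + ip ((R ^ k) w) v := by
  have hy : H ((R ^ (k + 1)) v) + (α : ℂ) • (R ^ (k + 1)) v = (R ^ k) v := by
    rw [pow_succ', Module.End.mul_apply, hR]
  rw [hf.ip_pow_apply_comm hR hmap hsa _ hu hv, hf.ip_pow_apply_comm hR hmap hsa _ hw hv, ← hy,
    hf.add_left, hf.smul_left, hf.add_right, hf.smul_right, Complex.conj_ofReal,
    hsa _ hw _ (Submodule.pow_apply_mem hmap _ hv)]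
  ring

end IsPosHermitianForm

section Comparison

variable {ip₀ ip₁ : E → E → ℂ} {𝒞 : Submodule ℂ E} {H₀ H₁ R₀ R₁ : E →ₗ[ℂ] E} {α ε : ℝ}

theorem re_pow_succ_add_le_three_mul (hf₀ : IsPosHermitianForm ip₀)
    (hf₁ : IsPosHermitianForm ip₁) (hR₁ : ∀ u, H₁ (R₁ u) + (α : ℂ) • R₁ u = u) (hα : 1 ≤ α)
    (hmap₁ : ∀ u ∈ 𝒞, R₁ u ∈ 𝒞) (hnn₁ : ∀ u ∈ 𝒞, 0 ≤ (ip₁ (H₁ u) u).re) (hε : ε < 1 / 2)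
    (hnorm : ∀ u ∈ 𝒞,
      (1 - ε) * (ip₀ u u).re ≤ (ip₁ u u).re ∧ (ip₁ u u).re ≤ (1 + ε) * (ip₀ u u).re)
    (hform : ∀ u ∈ 𝒞, (1 - ε) * (ip₀ (H₀ u) u).re ≤ (ip₁ (H₁ u) u).re)
    (k : ℕ) {v : E} (hv : v ∈ 𝒞) :
    (ip₀ ((R₁ ^ (k + 1)) v) ((R₁ ^ (k + 1)) v)).re
      + (ip₀ (H₀ ((R₁ ^ (k + 1)) v)) ((R₁ ^ (k + 1)) v)).re ≤ 3 * (ip₀ v v).re := by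
  have hz := Submodule.pow_apply_mem hmap₁ k hv
  have hy := hmap₁ _ hz
  rw [pow_succ', Module.End.mul_apply]
  have hbudget := hf₁.re_resolvent_le hR₁ hα _ (hnn₁ _ hy)
  have hmono := hf₁.re_pow_apply_le hR₁ hα hmap₁ hnn₁ k hv
  have hclose : (1 - ε) * ((ip₀ (R₁ ((R₁ ^ k) v)) (R₁ ((R₁ ^ k) v))).re
      + (ip₀ (H₀ (R₁ ((R₁ ^ k) v))) (R₁ ((R₁ ^ k) v))).re) ≤ (1 + ε) * (ip₀ v v).re := by
    linarith [(hnorm _ hy).1, hform _ hy, (hnorm v hv).2, hf₁.re_nonneg (H₁ (R₁ ((R₁ ^ k) v)))]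
  nlinarith [hf₀.re_nonneg v]

theorem norm_ip_pow_succ_sub_le (hf₁ : IsPosHermitianForm ip₁)
    (hR₀ : ∀ u, H₀ (R₀ u) + (α : ℂ) • R₀ u = u) (hR₁ : ∀ u, H₁ (R₁ u) + (α : ℂ) • R₁ u = u)
    (hmap₀ : ∀ u ∈ 𝒞, R₀ u ∈ 𝒞) (hmap₁ : ∀ u ∈ 𝒞, R₁ u ∈ 𝒞)
    (hsa₁ : ∀ u ∈ 𝒞, ∀ v ∈ 𝒞, ip₁ (H₁ u) v = ip₁ u (H₁ v))
    (hip : ∀ u ∈ 𝒞, ∀ v ∈ 𝒞, ‖ip₁ u v - ip₀ u v‖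
      ≤ ε * Real.sqrt ((ip₀ u u).re) * Real.sqrt ((ip₀ v v).re))
    (hQ : ∀ u ∈ 𝒞, ∀ v ∈ 𝒞, ‖ip₁ (H₁ u) v - ip₀ (H₀ u) v‖
      ≤ ε * Real.sqrt ((ip₀ (H₀ u) u).re * (ip₀ (H₀ v) v).re))
    (k : ℕ) {u v : E} (hu : u ∈ 𝒞) (hv : v ∈ 𝒞) :
    ‖ip₁ ((R₁ ^ (k + 1)) u) v - ip₀ ((R₀ ^ (k + 1)) u) v‖
      ≤ ε * (√(ip₀ (H₀ (R₀ u)) (H₀ (R₀ u))).re * √(ip₀ ((R₁ ^ (k + 1)) v) ((R₁ ^ (k + 1)) v)).re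
          + √((ip₀ (H₀ (R₀ u)) (R₀ u)).re
            * (ip₀ (H₀ ((R₁ ^ (k + 1)) v)) ((R₁ ^ (k + 1)) v)).re))
        + ‖ip₁ ((R₁ ^ k) (R₀ u)) v - ip₀ ((R₀ ^ k) (R₀ u)) v‖ := by
  set w := R₀ u
  set y := (R₁ ^ (k + 1)) v
  have hw : w ∈ 𝒞 := hmap₀ u hu
  have ha : H₀ w ∈ 𝒞 := by
    rw [eq_sub_of_add_eq (hR₀ u)]
    exact 𝒞.sub_mem hu (𝒞.smul_mem _ hw)
  have hy : y ∈ 𝒞 := Submodule.pow_apply_mem hmap₁ _ hv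
  have hsplit : ip₁ ((R₁ ^ (k + 1)) u) v - ip₀ ((R₀ ^ (k + 1)) u) v
      = (ip₁ (H₀ w) y - ip₀ (H₀ w) y) - (ip₁ (H₁ w) y - ip₀ (H₀ w) y)
        + (ip₁ ((R₁ ^ k) w) v - ip₀ ((R₀ ^ k) w) v) := by
    have hu' : H₀ w + (α : ℂ) • w ∈ 𝒞 := (hR₀ u).symm ▸ hu
    have hid := hf₁.ip_pow_succ_apply_add_smul hR₁ hmap₁ hsa₁ k hu' hw hv
    rw [hR₀ u] at hid
    have hpow : (R₀ ^ (k + 1)) u = (R₀ ^ k) w := by rw [pow_succ, Module.End.mul_apply]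
    rw [hid, hpow]
    ring
  rw [hsplit]
  calc _ ≤ ‖ip₁ (H₀ w) y - ip₀ (H₀ w) y‖ + ‖ip₁ (H₁ w) y - ip₀ (H₀ w) y‖
        + ‖ip₁ ((R₁ ^ k) w) v - ip₀ ((R₀ ^ k) w) v‖ :=
        (norm_add_le _ _).trans (by gcongr; exact norm_sub_le _ _)
    _ ≤ ε * √(ip₀ (H₀ w) (H₀ w)).re * √(ip₀ y y).re
          + ε * √((ip₀ (H₀ w) w).re * (ip₀ (H₀ y) y).re)
        + ‖ip₁ ((R₁ ^ k) w) v - ip₀ ((R₀ ^ k) w) v‖ := by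
      gcongr
      exacts [hip _ ha _ hy, hQ _ hw _ hy]
    _ = _ := by ring

theorem norm_ip_pow_sub_le (hf₀ : IsPosHermitianForm ip₀) (hf₁ : IsPosHermitianForm ip₁)
    (hR₀ : ∀ u, H₀ (R₀ u) + (α : ℂ) • R₀ u = u) (hR₁ : ∀ u, H₁ (R₁ u) + (α : ℂ) • R₁ u = u)
    (hmap₀ : ∀ u ∈ 𝒞, R₀ u ∈ 𝒞) (hmap₁ : ∀ u ∈ 𝒞, R₁ u ∈ 𝒞)
    (hsa₁ : ∀ u ∈ 𝒞, ∀ v ∈ 𝒞, ip₁ (H₁ u) v = ip₁ u (H₁ v))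
    (hnn₀ : ∀ u ∈ 𝒞, 0 ≤ (ip₀ (H₀ u) u).re) (hnn₁ : ∀ u ∈ 𝒞, 0 ≤ (ip₁ (H₁ u) u).re)
    (hε0 : 0 ≤ ε) (hε : ε < 1 / 2)
    (hnorm : ∀ u ∈ 𝒞,
      (1 - ε) * (ip₀ u u).re ≤ (ip₁ u u).re ∧ (ip₁ u u).re ≤ (1 + ε) * (ip₀ u u).re)
    (hform : ∀ u ∈ 𝒞, (1 - ε) * (ip₀ (H₀ u) u).re ≤ (ip₁ (H₁ u) u).re)
    (hip : ∀ u ∈ 𝒞, ∀ v ∈ 𝒞, ‖ip₁ u v - ip₀ u v‖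
      ≤ ε * Real.sqrt ((ip₀ u u).re) * Real.sqrt ((ip₀ v v).re))
    (hQ : ∀ u ∈ 𝒞, ∀ v ∈ 𝒞, ‖ip₁ (H₁ u) v - ip₀ (H₀ u) v‖
      ≤ ε * Real.sqrt ((ip₀ (H₀ u) u).re * (ip₀ (H₀ v) v).re))
    (hα : 1 ≤ α) (k : ℕ) {u v : E} (hu : u ∈ 𝒞) (hv : v ∈ 𝒞) :
    ‖ip₁ ((R₁ ^ k) u) v - ip₀ ((R₀ ^ k) u) v‖
      ≤ ε * √(ip₀ u u).re * √((3 * k + 1) * (ip₀ v v).re) := by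
  induction k generalizing u with
  | zero => simpa using hip u hu v hv
  | succ k ih =>
    set w := R₀ u
    set y := (R₁ ^ (k + 1)) v
    have hw : w ∈ 𝒞 := hmap₀ u hu
    have hy : y ∈ 𝒞 := Submodule.pow_apply_mem hmap₁ _ hv
    have hbudget : (ip₀ (H₀ w) (H₀ w)).re + (ip₀ (H₀ w) w).re ≤ (ip₀ u u).re - (ip₀ w w).re := by
      linarith [hf₀.re_resolvent_le hR₀ hα u (hnn₀ w hw)]
    have hW : (ip₀ y y).re + (ip₀ (H₀ y) y).re ≤ 3 * (ip₀ v v).re :=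
      re_pow_succ_add_le_three_mul hf₀ hf₁ hR₁ hα hmap₁ hnn₁ hε hnorm hform k hv
    have hcs : √(ip₀ (H₀ w) (H₀ w)).re * √(ip₀ y y).re + √((ip₀ (H₀ w) w).re * (ip₀ (H₀ y) y).re)
        ≤ √((ip₀ u u).re - (ip₀ w w).re) * √(3 * (ip₀ v v).re) := by
      rw [Real.sqrt_mul (hnn₀ w hw)]
      refine (Real.sqrt_mul_sqrt_add_sqrt_mul_sqrt_le (hf₀.re_nonneg _) (hf₀.re_nonneg _)
        (hnn₀ w hw) (hnn₀ y hy)).trans ?_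
      gcongr
    calc _ ≤ ε * (√((ip₀ u u).re - (ip₀ w w).re) * √(3 * (ip₀ v v).re))
          + ε * √(ip₀ w w).re * √((3 * k + 1) * (ip₀ v v).re) :=
          (norm_ip_pow_succ_sub_le hf₁ hR₀ hR₁ hmap₀ hmap₁ hsa₁ hip hQ k hu hv).trans
            (add_le_add (mul_le_mul_of_nonneg_left hcs hε0) (ih hw))
      _ ≤ ε * (√((ip₀ u u).re - (ip₀ w w).re + (ip₀ w w).re)
          * √(3 * (ip₀ v v).re + (3 * k + 1) * (ip₀ v v).re)) := by
        rw [mul_assoc ε, ← mul_add]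
        gcongr
        exact Real.sqrt_mul_sqrt_add_sqrt_mul_sqrt_le
          (by linarith [hf₀.re_nonneg (H₀ w), hnn₀ w hw]) (by linarith [hf₀.re_nonneg v])
          (hf₀.re_nonneg w) (mul_nonneg (by positivity) (hf₀.re_nonneg v))
      _ = _ := by push_cast; ring_nf

end Comparison

end

theorem stmt17_general {E : Type*} [AddCommGroup E] [Module ℂ E]
    (𝒞 : Submodule ℂ E)
    (ip₀ ip₁ : E → E → ℂ)
    (hadd₀ : ∀ u v w : E, ip₀ (u + v) w = ip₀ u w + ip₀ v w)
    (hsmul₀ : ∀ (a : ℂ) (u v : E), ip₀ (a • u) v = a * ip₀ u v)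
    (hherm₀ : ∀ u v : E, ip₀ v u = (starRingEnd ℂ) (ip₀ u v))
    (hpos₀ : ∀ u : E, 0 ≤ (ip₀ u u).re)
    (hadd₁ : ∀ u v w : E, ip₁ (u + v) w = ip₁ u w + ip₁ v w)
    (hsmul₁ : ∀ (a : ℂ) (u v : E), ip₁ (a • u) v = a * ip₁ u v)
    (hherm₁ : ∀ u v : E, ip₁ v u = (starRingEnd ℂ) (ip₁ u v))
    (hpos₁ : ∀ u : E, 0 ≤ (ip₁ u u).re)
    (H₀ H₁ : E →ₗ[ℂ] E)
    (hsa₁ : ∀ u ∈ 𝒞, ∀ v ∈ 𝒞, ip₁ (H₁ u) v = ip₁ u (H₁ v))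
    (hnn₀ : ∀ u ∈ 𝒞, 0 ≤ (ip₀ (H₀ u) u).re)
    (hnn₁ : ∀ u ∈ 𝒞, 0 ≤ (ip₁ (H₁ u) u).re)
    (ε : ℝ) (hε0 : 0 < ε) (hε : ε < 1 / 2)
    (hnorm_close : ∀ u ∈ 𝒞,
      (1 - ε) * (ip₀ u u).re ≤ (ip₁ u u).re ∧ (ip₁ u u).re ≤ (1 + ε) * (ip₀ u u).re)
    (hform_close : ∀ u ∈ 𝒞,
      (1 - ε) * (ip₀ (H₀ u) u).re ≤ (ip₁ (H₁ u) u).re ∧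
        (ip₁ (H₁ u) u).re ≤ (1 + ε) * (ip₀ (H₀ u) u).re)
    (hip : ∀ u ∈ 𝒞, ∀ v ∈ 𝒞, ‖ip₁ u v - ip₀ u v‖
      ≤ ε * Real.sqrt ((ip₀ u u).re) * Real.sqrt ((ip₀ v v).re))
    (hQ : ∀ u ∈ 𝒞, ∀ v ∈ 𝒞, ‖ip₁ (H₁ u) v - ip₀ (H₀ u) v‖
      ≤ ε * Real.sqrt ((ip₀ (H₀ u) u).re * (ip₀ (H₀ v) v).re))
    (α : ℝ) (hα : 1 < α)
    (R₀ R₁ : E →ₗ[ℂ] E)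
    (hR₀ : ∀ u : E, H₀ (R₀ u) + (α : ℂ) • R₀ u = u)
    (hR₁ : ∀ u : E, H₁ (R₁ u) + (α : ℂ) • R₁ u = u)
    (hR₀map : ∀ u ∈ 𝒞, R₀ u ∈ 𝒞)
    (hR₁map : ∀ u ∈ 𝒞, R₁ u ∈ 𝒞) :
    ∀ (m : ℕ), ∀ u ∈ 𝒞, ∀ v ∈ 𝒞,
      ‖ip₁ ((R₁ ^ m) u) v - ip₀ ((R₀ ^ m) u) v‖
        ≤ (2 * (m : ℝ) + 1) * ε * Real.sqrt ((ip₀ u u).re) * Real.sqrt ((ip₀ v v).re) := by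
  intro m u hu v hv
  have hf₀ : IsPosHermitianForm ip₀ := ⟨hadd₀, hsmul₀, hherm₀, hpos₀⟩
  have hf₁ : IsPosHermitianForm ip₁ := ⟨hadd₁, hsmul₁, hherm₁, hpos₁⟩
  have hsqrt : √((3 * m + 1) * (ip₀ v v).re) ≤ (2 * m + 1) * √(ip₀ v v).re := by
    rw [Real.sqrt_mul (by positivity)]
    gcongr
    rw [Real.sqrt_le_left (by positivity)]
    nlinarith
  calc _ ≤ ε * √(ip₀ u u).re * √((3 * m + 1) * (ip₀ v v).re) :=
        norm_ip_pow_sub_le hf₀ hf₁ hR₀ hR₁ hR₀map hR₁map hsa₁ hnn₀ hnn₁ hε0.le hε hnorm_close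
          (fun u hu ↦ (hform_close u hu).1) hip hQ hα.le m hu hv
    _ ≤ ε * √(ip₀ u u).re * ((2 * m + 1) * √(ip₀ v v).re) := by gcongr
    _ = _ := by ring

/-- Resolvent comparison lemma for `ε`-close operators.  `ℋ = E` is a complex vector
space carrying two inner products `ip₀, ip₁` (modelled as hermitian positive maps
`E → E → ℂ`, linear in the first variable), `𝒞` is a subspace, and `H₀, H₁` are linear
operators, self-adjoint and nonnegative with respect to `ip₀`, `ip₁` on `𝒞`, whose norms
and quadratic forms `Qᵢ(u,v) = (Hᵢ u, v)ᵢ` are `ε`-close on `𝒞` (with the bilinear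
consequences of `ε`-closeness recorded as hypotheses `hip`, `hQ`).  `Rᵢ = (Hᵢ + α)⁻¹`
maps `𝒞` into `𝒞` and satisfies the Cauchy–Schwarz-type bounds
`Qᵢ(Rᵢw, Rᵢw) ≤ ‖w‖ᵢ²` and `‖Rᵢw‖ᵢ ≤ ‖w‖ᵢ`.  Then for all `u, v ∈ 𝒞` and `m ≥ 0`,
`|((H₁+α)^{-m}u, v)₁ - ((H₀+α)^{-m}u, v)₀| ≤ (2m+1) ε ‖u‖₀ ‖v‖₀`. -/
theorem stmt17 {E : Type*} [AddCommGroup E] [Module ℂ E]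
    (𝒞 : Submodule ℂ E)
    (ip₀ ip₁ : E → E → ℂ)
    (hadd₀ : ∀ u v w : E, ip₀ (u + v) w = ip₀ u w + ip₀ v w)
    (hsmul₀ : ∀ (a : ℂ) (u v : E), ip₀ (a • u) v = a * ip₀ u v)
    (hherm₀ : ∀ u v : E, ip₀ v u = (starRingEnd ℂ) (ip₀ u v))
    (hpos₀ : ∀ u : E, 0 ≤ (ip₀ u u).re)
    (hadd₁ : ∀ u v w : E, ip₁ (u + v) w = ip₁ u w + ip₁ v w)
    (hsmul₁ : ∀ (a : ℂ) (u v : E), ip₁ (a • u) v = a * ip₁ u v)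
    (hherm₁ : ∀ u v : E, ip₁ v u = (starRingEnd ℂ) (ip₁ u v))
    (hpos₁ : ∀ u : E, 0 ≤ (ip₁ u u).re)
    (H₀ H₁ : E →ₗ[ℂ] E)
    (hsa₀ : ∀ u ∈ 𝒞, ∀ v ∈ 𝒞, ip₀ (H₀ u) v = ip₀ u (H₀ v))
    (hsa₁ : ∀ u ∈ 𝒞, ∀ v ∈ 𝒞, ip₁ (H₁ u) v = ip₁ u (H₁ v))
    (hnn₀ : ∀ u ∈ 𝒞, 0 ≤ (ip₀ (H₀ u) u).re)
    (hnn₁ : ∀ u ∈ 𝒞, 0 ≤ (ip₁ (H₁ u) u).re)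
    (ε : ℝ) (hε0 : 0 < ε) (hε : ε < 1 / 2)
    (hnorm_close : ∀ u ∈ 𝒞,
      (1 - ε) * (ip₀ u u).re ≤ (ip₁ u u).re ∧ (ip₁ u u).re ≤ (1 + ε) * (ip₀ u u).re)
    (hform_close : ∀ u ∈ 𝒞,
      (1 - ε) * (ip₀ (H₀ u) u).re ≤ (ip₁ (H₁ u) u).re ∧
        (ip₁ (H₁ u) u).re ≤ (1 + ε) * (ip₀ (H₀ u) u).re)
    (hip : ∀ u ∈ 𝒞, ∀ v ∈ 𝒞, ‖ip₁ u v - ip₀ u v‖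
      ≤ ε * Real.sqrt ((ip₀ u u).re) * Real.sqrt ((ip₀ v v).re))
    (hQ : ∀ u ∈ 𝒞, ∀ v ∈ 𝒞, ‖ip₁ (H₁ u) v - ip₀ (H₀ u) v‖
      ≤ ε * Real.sqrt ((ip₀ (H₀ u) u).re * (ip₀ (H₀ v) v).re))
    (α : ℝ) (hα : 1 < α)
    (R₀ R₁ : E →ₗ[ℂ] E)
    (hR₀ : ∀ u : E, H₀ (R₀ u) + (α : ℂ) • R₀ u = u)
    (hR₁ : ∀ u : E, H₁ (R₁ u) + (α : ℂ) • R₁ u = u)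
    (hR₀' : ∀ u ∈ 𝒞, R₀ (H₀ u + (α : ℂ) • u) = u)
    (hR₁' : ∀ u ∈ 𝒞, R₁ (H₁ u + (α : ℂ) • u) = u)
    (hR₀map : ∀ u ∈ 𝒞, R₀ u ∈ 𝒞)
    (hR₁map : ∀ u ∈ 𝒞, R₁ u ∈ 𝒞)
    (hCS₀ : ∀ w ∈ 𝒞, (ip₀ (H₀ (R₀ w)) (R₀ w)).re ≤ (ip₀ w w).re ∧
      (ip₀ (R₀ w) (R₀ w)).re ≤ (ip₀ w w).re)
    (hCS₁ : ∀ w ∈ 𝒞, (ip₁ (H₁ (R₁ w)) (R₁ w)).re ≤ (ip₁ w w).re ∧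
      (ip₁ (R₁ w) (R₁ w)).re ≤ (ip₁ w w).re) :
    ∀ (m : ℕ), ∀ u ∈ 𝒞, ∀ v ∈ 𝒞,
      ‖ip₁ ((R₁ ^ m) u) v - ip₀ ((R₀ ^ m) u) v‖
        ≤ (2 * (m : ℝ) + 1) * ε * Real.sqrt ((ip₀ u u).re) * Real.sqrt ((ip₀ v v).re) :=
  stmt17_general 𝒞 ip₀ ip₁ hadd₀ hsmul₀ hherm₀ hpos₀ hadd₁ hsmul₁ hherm₁ hpos₁ H₀ H₁ hsa₁ hnn₀ hnn₁
    ε hε0 hε hnorm_close hform_close hip hQ α hα R₀ R₁ hR₀ hR₁ hR₀map hR₁map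
end
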